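/- The commuting graph of the semiring of 2 × 2 matrices over the tropical semiring 𝕋 has infinite diameter (equivalently, Γ(M_2(𝕋)) is disconnected). -/

import Mathlib

/-- The commuting graph of the semiring of `n × n` matrices over `R`: vertices are the
noncentral matrices, and two distinct vertices are adjacent iff they commute. -/
def commGraph (R : Type*) [Semiring R] (n : ℕ) :
    SimpleGraph {X : Matrix (Fin n) (Fin n) R // ¬ ∀ Y, X * Y = Y * X} where
  Adj X Y := X ≠ Y ∧ X.1 * Y.1 = Y.1 * X.1
  symm := ⟨fun _ _ h => ⟨fun e => h.1 e.symm, h.2.symm⟩⟩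
  loopless := ⟨fun _ h => h.1 rfl⟩


/-- The max-plus tropical semiring `ℝ ∪ {-∞}`, realized as the `Tropical` semiring on the
order dual of `WithBot ℝ`. -/
noncomputable instance : LinearOrderedAddCommMonoidWithTop ((WithBot ℝ)ᵒᵈ) :=
  { (inferInstance : AddCommMonoid ((WithBot ℝ)ᵒᵈ)),
    (inferInstance : LinearOrder ((WithBot ℝ)ᵒᵈ)),
    (inferInstance : IsOrderedAddMonoid ((WithBot ℝ)ᵒᵈ)),
    (inferInstance : OrderTop ((WithBot ℝ)ᵒᵈ)) with
    top_add' := fun a => WithBot.bot_add a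
    isAddLeftRegular_of_ne_top := fun x hx _ _ h =>
      WithBot.add_left_cancel (α := ℝ) (x := OrderDual.ofDual x) hx h }

abbrev Trop : Type := Tropical ((WithBot ℝ)ᵒᵈ)


/-!
Over a commutative semiring in which nonzero elements are cancellable, such as `𝕋` (whose
multiplication is addition on `ℝ ∪ {-∞}`), a `2 × 2` matrix commuting with a diagonal matrix
`diag(a, b)` with `a ≠ b` is diagonal: the off-diagonal entries give `a y = y b` and `b z = z a`,
which force `y = z = 0`. As a diagonal matrix with `a = b` is scalar, hence central, the
noncentral diagonal matrices form a union of connected components of the commuting graph, and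
the noncentral matrix `E₁₂` lies outside it.
-/

namespace Tropical

variable {R : Type*}

instance [Nontrivial R] : Nontrivial (Tropical R) := trop_injective.nontrivial

instance [LinearOrderedAddCommMonoidWithTop R] : IsCancelMulZero (Tropical R) :=
  have hreg {a : Tropical R} (ha : a ≠ 0) : IsAddRegular (untrop a) :=
    IsAddRegular.of_ne_top fun h => ha (untrop_injective h)
  { mul_left_cancel_of_ne_zero := fun ha _ _ h =>
      untrop_injective ((hreg ha).1 (congrArg untrop h))
    mul_right_cancel_of_ne_zero := fun ha _ _ h =>
      untrop_injective ((hreg ha).2 (congrArg untrop h)) }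

end Tropical

namespace Matrix

variable {R : Type*}

theorem isDiag_fin_two_iff [Zero R] {A : Matrix (Fin 2) (Fin 2) R} :
    A.IsDiag ↔ A 0 1 = 0 ∧ A 1 0 = 0 := by
  refine ⟨fun h => ⟨h (by decide), h (by decide)⟩, fun ⟨h01, h10⟩ i j hij => ?_⟩
  fin_cases i <;> fin_cases j <;> simp_all

theorem IsDiag.eq_scalar_of_apply_zero_zero_eq [Semiring R] {A : Matrix (Fin 2) (Fin 2) R}
    (hA : A.IsDiag) (h : A 0 0 = A 1 1) : A = scalar (Fin 2) (A 0 0) := by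
  rw [isDiag_fin_two_iff] at hA
  ext i j
  fin_cases i <;> fin_cases j <;> simp [hA.1, hA.2, h]

theorem IsDiag.of_commute [CommSemiring R] [IsRightCancelMulZero R]
    {A B : Matrix (Fin 2) (Fin 2) R} (hA : A.IsDiag) (hne : A 0 0 ≠ A 1 1) (h : Commute A B) :
    B.IsDiag := by
  rw [isDiag_fin_two_iff] at hA ⊢
  have e01 := congrFun (congrFun h.eq 0) 1
  have e10 := congrFun (congrFun h.eq 1) 0
  simp only [mul_apply, Fin.sum_univ_two, hA.1, hA.2, zero_mul, mul_zero, zero_add,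
    add_zero] at e01 e10
  constructor
  · by_contra hB
    exact hne (mul_right_cancel₀ hB (by rw [e01, mul_comm]))
  · by_contra hB
    exact hne (mul_right_cancel₀ hB (by rw [e10, mul_comm])).symm

end Matrix

namespace commGraph

open Matrix

variable {R : Type*} [CommSemiring R] [IsRightCancelMulZero R]
  {X Y : {X : Matrix (Fin 2) (Fin 2) R // ¬ ∀ Y, X * Y = Y * X}}

theorem isDiag_of_adj (hXY : (commGraph R 2).Adj X Y) (hX : X.1.IsDiag) : Y.1.IsDiag := by
  have hne : X.1 0 0 ≠ X.1 1 1 := fun h => X.2 fun Z => by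
    rw [hX.eq_scalar_of_apply_zero_zero_eq h]
    exact (scalar_commute _ (fun _ => Commute.all _ _) Z).eq
  exact hX.of_commute hne hXY.2

theorem isDiag_of_reachable (hXY : (commGraph R 2).Reachable X Y) (hX : X.1.IsDiag) :
    Y.1.IsDiag := by
  rw [SimpleGraph.reachable_iff_reflTransGen] at hXY
  induction hXY with
  | refl => exact hX
  | tail _ hZY ih => exact isDiag_of_adj hZY ih

theorem ediam_fin_two_eq_top [Nontrivial R] : (commGraph R 2).ediam = ⊤ := by
  let D : Matrix (Fin 2) (Fin 2) R := diagonal ![1, 0]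
  let E : Matrix (Fin 2) (Fin 2) R := single 0 1 1
  have hDE : D * E ≠ E * D := fun h =>
    one_ne_zero (α := R) (by simpa [D, E] using congrFun (congrFun h 0) 1)
  have hE : ¬ E.IsDiag := fun h => one_ne_zero (α := R) (h (by decide : (0 : Fin 2) ≠ 1))
  refine SimpleGraph.ediam_eq_top_of_not_preconnected fun h => hE ?_
  exact isDiag_of_reachable (h ⟨D, fun h => hDE (h E)⟩ ⟨E, fun h => hDE (h D).symm⟩)
    (isDiag_diagonal _)

end commGraph

/-- The commuting graph of `M_2(𝕋)` over the tropical semiring has infinite diameter. -/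
theorem diam_commGraph_M2_tropical : (commGraph Trop 2).ediam = ⊤ :=
  commGraph.ediam_fin_two_eq_top
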